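/- arXiv:2503.18165 — 2 statements merged into one kernel-verified Lean document; each statement's English description precedes it below -/
import Mathlib

section
/- Let 𝒳 be a 1-dimensional trajectory set, and let 𝒩 = {X ∈ 𝒳 : ∃ j ≥ 0 such that (X,j) is an arbitrage node and X_{j+1} ≠ X_j}. Then 𝒩 is a null set, i.e. Ī_0(1_𝒩) = 0. -/
open scoped InnerProductSpace ENNReal
open Finset

namespace Traj

variable {E : Type*} [NormedAddCommGroup E] [InnerProductSpace ℝ E]

/-- A trajectory set: a nonempty set of sequences sharing a common initial value. -/
def IsTrajectorySet (T : Set (ℕ → E)) (x0 : E) : Prop :=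
  T.Nonempty ∧ ∀ X ∈ T, X 0 = x0

/-- The conditional trajectory set at the node `(X, k)`. -/
def condSet (T : Set (ℕ → E)) (X : ℕ → E) (k : ℕ) : Set (ℕ → E) :=
  {Y | Y ∈ T ∧ ∀ i ≤ k, Y i = X i}

/-- Non-anticipativity of a family `(G i)_{i ≥ j}` of functions on the conditional set. -/
def NonAnticipative (T : Set (ℕ → E)) (X : ℕ → E) (j : ℕ)
    {F : Type*} (G : ℕ → (ℕ → E) → F) : Prop :=
  ∀ i, j ≤ i → ∀ Y ∈ condSet T X j, ∀ Z ∈ condSet T X j,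
    (∀ k, j ≤ k → k ≤ i → Y k = Z k) → G i Y = G i Z

/-- The simple portfolio payoff `Π^{V,H}_{j,n}`. -/
noncomputable def piPort (H : ℕ → (ℕ → E) → E) (j n : ℕ) (V : ℝ) (Y : ℕ → E) : ℝ :=
  V + ∑ i ∈ Finset.Ico j n, ⟪H i Y, Y (i + 1) - Y i⟫_ℝ

/-- The total initial cost `Σ_{m ≥ 0} V^m` of a generalized portfolio (`V^m ≥ 0` for `m ≥ 1`). -/
noncomputable def SuperhedgeCost (V : ℕ → ℝ) : EReal :=
  (V 0 : EReal) + ((∑' m : ℕ, ENNReal.ofReal (V (m + 1)) : ℝ≥0∞) : EReal)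

/-- `(V, H, n)` is a generalized superhedge of `f` at node `(X, j)`: `f_0 = Π^{V⁰,H⁰}_{j,n₀}`
and, for `m ≥ 1`, `f_m = Π^{Vᵐ,Hᵐ}_{j,n_m}` with `Π^{Vᵐ,Hᵐ}_{j,n} ≥ 0` for all `n ≥ j`,
and `f ≤ Σ_{m ≥ 0} f_m` on the conditional set. -/
def IsSuperhedge (T : Set (ℕ → E)) (X : ℕ → E) (j : ℕ) (f : (ℕ → E) → EReal)
    (V : ℕ → ℝ) (H : ℕ → ℕ → (ℕ → E) → E) (n : ℕ → ℕ) : Prop :=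
  (∀ m, NonAnticipative T X j (H m)) ∧ (∀ m, j ≤ n m) ∧
  (∀ m, 1 ≤ m → ∀ k, j ≤ k → ∀ Y ∈ condSet T X j, 0 ≤ piPort (H m) j k (V m) Y) ∧
  (∀ Y ∈ condSet T X j,
    f Y ≤ (piPort (H 0) j (n 0) (V 0) Y : EReal)
      + ((∑' m : ℕ, ENNReal.ofReal (piPort (H (m + 1)) j (n (m + 1)) (V (m + 1)) Y) :
          ℝ≥0∞) : EReal))

/-- The conditional superhedging operator `σ̄_j f (X)`. -/
noncomputable def sigmaUp (T : Set (ℕ → E)) (X : ℕ → E) (j : ℕ)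
    (f : (ℕ → E) → EReal) : EReal :=
  sInf {c : EReal | ∃ V H n, IsSuperhedge T X j f V H n ∧ c = SuperhedgeCost V}

/-- The conditional underhedging operator `σ̲_j f = -σ̄_j (-f)`. -/
noncomputable def sigmaDown (T : Set (ℕ → E)) (X : ℕ → E) (j : ℕ)
    (f : (ℕ → E) → EReal) : EReal :=
  - sigmaUp T X j (fun Y => - f Y)

/-- Hedge data for the conditional norm operator: all portfolios are nonnegative. -/
def IsNormHedge (T : Set (ℕ → E)) (X : ℕ → E) (j : ℕ) (f : (ℕ → E) → ℝ≥0∞)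
    (V : ℕ → ℝ) (H : ℕ → ℕ → (ℕ → E) → E) (n : ℕ → ℕ) : Prop :=
  (∀ m, NonAnticipative T X j (H m)) ∧ (∀ m, j ≤ n m) ∧
  (∀ m, ∀ k, j ≤ k → ∀ Y ∈ condSet T X j, 0 ≤ piPort (H m) j k (V m) Y) ∧
  (∀ Y ∈ condSet T X j,
    f Y ≤ ∑' m : ℕ, ENNReal.ofReal (piPort (H m) j (n m) (V m) Y))

/-- The conditional norm operator `Ī_j f (X)` (for nonnegative extended-real `f`). -/
noncomputable def Ibar (T : Set (ℕ → E)) (X : ℕ → E) (j : ℕ)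
    (f : (ℕ → E) → ℝ≥0∞) : ℝ≥0∞ :=
  sInf {c : ℝ≥0∞ | ∃ V H n, IsNormHedge T X j f V H n ∧
    c = ∑' m : ℕ, ENNReal.ofReal (V m)}

/-- `A` is conditionally null at the node `(X, j)`. -/
def NullAt (T : Set (ℕ → E)) (X : ℕ → E) (j : ℕ) (A : Set (ℕ → E)) : Prop :=
  Ibar T X j (A.indicator fun _ => (1 : ℝ≥0∞)) = 0

/-- `A` is a (global) null set. -/
def IsNull (T : Set (ℕ → E)) (A : Set (ℕ → E)) : Prop :=
  ∀ X ∈ T, NullAt T X 0 A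

/-- Property `(L_{(X,j)})`. -/
def PropertyL (T : Set (ℕ → E)) (X : ℕ → E) (j : ℕ) : Prop :=
  ∀ V H n, IsSuperhedge T X j (fun _ => (0 : EReal)) V H n →
    (0 : EReal) ≤ SuperhedgeCost V

/-- `(X, k)` is an arbitrage-free node. -/
def ArbitrageFreeNode (T : Set (ℕ → E)) (X : ℕ → E) (k : ℕ) : Prop :=
  ∀ h : E, (∀ Y ∈ condSet T X k, ⟪h, Y (k + 1) - Y k⟫_ℝ = 0) ∨
    (⨅ Y ∈ condSet T X k, ((⟪h, Y (k + 1) - Y k⟫_ℝ : ℝ) : EReal)) < 0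

/-- The set `𝒩` of trajectories passing (non-constantly) through an arbitrage node. -/
def arbNull (T : Set (ℕ → E)) : Set (ℕ → E) :=
  {X | X ∈ T ∧ ∃ j : ℕ, ¬ ArbitrageFreeNode T X j ∧ X (j + 1) ≠ X j}

/-- Property `(L)`-a.e. -/
def LaeHolds (T : Set (ℕ → E)) : Prop :=
  (∀ X ∈ T \ arbNull T, ∀ k, 1 ≤ k → PropertyL T X k) ∧
  (∀ X ∈ T, PropertyL T X 0)

/-- A bounded non-anticipative stopping rule. -/
def BoundedStoppingRule (T : Set (ℕ → E)) (N : (ℕ → E) → ℕ) : Prop :=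
  (∃ nstar, ∀ X ∈ T, N X ≤ nstar) ∧
  (∀ k : ℕ, ∀ X ∈ T, ∀ Y ∈ T, (∀ i ≤ k, X i = Y i) → (N X ≤ k ↔ N Y ≤ k))

end Traj

namespace Traj

/-!
At an arbitrage node `(X, j)` there is a position `h` whose gain `h ΔY_j` is nonnegative on every
trajectory of the node and, the market being one-dimensional, strictly positive on every
trajectory that actually moves at time `j`. Buying `N` units of this arbitrage at time `j` costs
nothing and yields a nonnegative payoff, and the countable family of these portfolios over all
pairs `(j, N)` superhedges the indicator of `𝒩` at zero initial cost.
-/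

theorem mem_condSet_self {E : Type*} {T : Set (ℕ → E)} {X : ℕ → E} (hX : X ∈ T) (k : ℕ) :
    X ∈ condSet T X k :=
  ⟨hX, fun _ _ => rfl⟩

theorem condSet_eq_of_agree {E : Type*} {T : Set (ℕ → E)} {Y Z : ℕ → E} {k : ℕ}
    (h : ∀ i ≤ k, Y i = Z i) : condSet T Y k = condSet T Z k := by
  ext W
  refine and_congr_right fun _ => forall₂_congr fun i hi => ?_
  rw [h i hi]

section

variable {E : Type*} [NormedAddCommGroup E] [InnerProductSpace ℝ E]

def IsArbitrage (T : Set (ℕ → E)) (X : ℕ → E) (k : ℕ) (h : E) : Prop :=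
  (∀ Y ∈ condSet T X k, 0 ≤ ⟪h, Y (k + 1) - Y k⟫_ℝ) ∧
    ∃ Y ∈ condSet T X k, ⟪h, Y (k + 1) - Y k⟫_ℝ ≠ 0

theorem exists_isArbitrage_of_not_arbitrageFreeNode {T : Set (ℕ → E)} {X : ℕ → E} {k : ℕ}
    (hX : ¬ ArbitrageFreeNode T X k) : ∃ h, IsArbitrage T X k h := by
  simp only [ArbitrageFreeNode, not_forall, not_or, not_lt, exists_prop] at hX
  obtain ⟨h, ⟨Y, hY, hzero⟩, hinf⟩ := hX
  exact ⟨h, fun Z hZ => EReal.coe_nonneg.mp (hinf.trans (biInf_le _ hZ)), Y, hY, hzero⟩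

open Classical in
/-- `0` at a node admitting no arbitrage. -/
noncomputable def arbWitness (T : Set (ℕ → E)) (X : ℕ → E) (k : ℕ) : E :=
  if hX : ∃ h, IsArbitrage T X k h then hX.choose else 0

theorem isArbitrage_arbWitness {T : Set (ℕ → E)} {X : ℕ → E} {k : ℕ}
    (hX : ∃ h, IsArbitrage T X k h) : IsArbitrage T X k (arbWitness T X k) := by
  rw [arbWitness, dif_pos hX]
  exact hX.choose_spec

theorem arbWitness_eq_of_agree (T : Set (ℕ → E)) {Y Z : ℕ → E} {k : ℕ}
    (h : ∀ i ≤ k, Y i = Z i) : arbWitness T Y k = arbWitness T Z k := by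
  unfold arbWitness IsArbitrage
  rw [condSet_eq_of_agree h]

theorem arbWitness_inner_nonneg (T : Set (ℕ → E)) {X Y : ℕ → E} {k : ℕ}
    (hY : Y ∈ condSet T X k) : 0 ≤ ⟪arbWitness T X k, Y (k + 1) - Y k⟫_ℝ := by
  by_cases hX : ∃ h, IsArbitrage T X k h
  · exact (isArbitrage_arbWitness hX).1 Y hY
  · simp [arbWitness, dif_neg hX]

noncomputable def arbTrade (T : Set (ℕ → E)) (j : ℕ) (c : ℝ) : ℕ → (ℕ → E) → E :=
  fun i Y => if i = j then c • arbWitness T Y j else 0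

theorem piPort_arbTrade (T : Set (ℕ → E)) (j : ℕ) (c : ℝ) (s n : ℕ) (V : ℝ) (Y : ℕ → E) :
    piPort (arbTrade T j c) s n V Y =
      V + if j ∈ Ico s n then c * ⟪arbWitness T Y j, Y (j + 1) - Y j⟫_ℝ else 0 := by
  have hterm : ∀ i, ⟪arbTrade T j c i Y, Y (i + 1) - Y i⟫_ℝ =
      if i = j then c * ⟪arbWitness T Y j, Y (j + 1) - Y j⟫_ℝ else 0 := by
    intro i
    by_cases hij : i = j
    · subst hij; simp [arbTrade, real_inner_smul_left]
    · simp [arbTrade, hij]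
  simp only [piPort, hterm, Finset.sum_ite_eq']

theorem nonAnticipative_arbTrade (T : Set (ℕ → E)) (X : ℕ → E) (s j : ℕ) (c : ℝ) :
    NonAnticipative T X s (arbTrade T j c) := by
  intro i _ Y hY Z hZ hYZ
  by_cases hij : i = j
  · subst hij
    have hagree : ∀ k ≤ i, Y k = Z k := fun k hk => by
      rcases le_total s k with hsk | hks
      · exact hYZ k hsk hk
      · rw [hY.2 k hks, hZ.2 k hks]
    simp only [arbTrade, if_pos, arbWitness_eq_of_agree T hagree]
  · simp [arbTrade, hij]

theorem piPort_arbTrade_nonneg {T : Set (ℕ → E)} {Y : ℕ → E} (hY : Y ∈ T) (j : ℕ) {c : ℝ}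
    (hc : 0 ≤ c) (s n : ℕ) : 0 ≤ piPort (arbTrade T j c) s n 0 Y := by
  rw [piPort_arbTrade, zero_add]
  split_ifs
  · exact mul_nonneg hc (arbWitness_inner_nonneg T (mem_condSet_self hY j))
  · exact le_rfl

theorem nullAt_of_isNormHedge {T : Set (ℕ → E)} {X : ℕ → E} {j : ℕ} {A : Set (ℕ → E)}
    {H : ℕ → ℕ → (ℕ → E) → E} {n : ℕ → ℕ}
    (hH : IsNormHedge T X j (A.indicator fun _ => 1) (fun _ => 0) H n) : NullAt T X j A :=
  nonpos_iff_eq_zero.mp <| sInf_le ⟨_, H, n, hH, by simp⟩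

end

theorem arbWitness_inner_pos {T : Set (ℕ → ℝ)} {Y : ℕ → ℝ} {j : ℕ} (hY : Y ∈ T)
    (harb : ¬ ArbitrageFreeNode T Y j) (hmove : Y (j + 1) ≠ Y j) :
    0 < ⟪arbWitness T Y j, Y (j + 1) - Y j⟫_ℝ := by
  have hw := isArbitrage_arbWitness (exists_isArbitrage_of_not_arbitrageFreeNode harb)
  have hw0 : arbWitness T Y j ≠ 0 := by
    obtain ⟨Z, _, hZ⟩ := hw.2
    rintro h0
    simp [h0] at hZ
  refine (hw.1 Y (mem_condSet_self hY j)).lt_of_ne' ?_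
  simpa using And.intro (sub_ne_zero.mpr hmove) hw0

theorem one_le_tsum_arbTrade {T : Set (ℕ → ℝ)} {Y : ℕ → ℝ} (hY : Y ∈ arbNull T) :
    1 ≤ ∑' m : ℕ, ENNReal.ofReal
      (piPort (arbTrade T m.unpair.1 m.unpair.2) 0 (m.unpair.1 + 1) 0 Y) := by
  obtain ⟨hYT, j, harb, hmove⟩ := hY
  have hpos := arbWitness_inner_pos hYT harb hmove
  obtain ⟨N, hN⟩ := exists_nat_gt (⟪arbWitness T Y j, Y (j + 1) - Y j⟫_ℝ)⁻¹
  calc 1 ≤ ENNReal.ofReal (piPort (arbTrade T j N) 0 (j + 1) 0 Y) := by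
        rw [piPort_arbTrade, zero_add, if_pos (by simp), ENNReal.one_le_ofReal]
        exact ((inv_lt_iff_one_lt_mul₀ hpos).mp hN).le
    _ ≤ _ := by
        simpa only [Nat.unpair_pair] using ENNReal.le_tsum (f := fun m : ℕ => ENNReal.ofReal
          (piPort (arbTrade T m.unpair.1 m.unpair.2) 0 (m.unpair.1 + 1) 0 Y)) (Nat.pair j N)

theorem arbNull_isNull_general
    (T : Set (ℕ → ℝ)) :
    IsNull T (arbNull T) := by
  intro X _
  apply nullAt_of_isNormHedge (H := fun m => arbTrade T m.unpair.1 m.unpair.2)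
    (n := fun m => m.unpair.1 + 1)
  refine ⟨fun m => nonAnticipative_arbTrade T X 0 _ _, fun m => Nat.zero_le _,
    fun m k _ Y hY => piPort_arbTrade_nonneg hY.1 _ (Nat.cast_nonneg _) _ _, fun Y _ => ?_⟩
  exact Set.indicator_apply_le' (fun hY => one_le_tsum_arbTrade hY) fun _ => zero_le

/-- the set `𝒩` of trajectories passing (non-constantly) through an arbitrage node
is a null set. -/
theorem arbNull_isNull
    (T : Set (ℕ → ℝ)) (x0 : ℝ) (hT : IsTrajectorySet T x0) :
    IsNull T (arbNull T) :=
  arbNull_isNull_general T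

end Traj
end

section
/- Let 𝒳 be a d-dimensional trajectory set, (X,j) a node, f : 𝒳 → [−∞,∞], and suppose there exist V ∈ ℝ, n ≥ j, a non-anticipative family (H_i)_{j≤i≤n−1} on 𝒳_{(X,j)}, and a set E ⊆ 𝒳 that is conditionally null at (X,j), such that f(X̂) ≤ V + Σ_{i=j}^{n−1} H_i(X̂)·Δ_i X̂ for all X̂ ∈ 𝒳_{(X,j)} \ E. Then σ̄_j f(X) ≤ V. -/
open scoped InnerProductSpace ENNReal
open Finset

/-!
Since `A` is conditionally null, countable subadditivity of `Ī_j` gives `Ī_j (∞ · 1_A)(X) = 0`: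
for every `ε > 0` there are nonnegative portfolios of total initial cost `< ε` whose payoffs sum
to `∞` on `A`. Appending them to the given simple portfolio superhedges `f` on the whole
conditional set at cost `< V + ε`.
-/

namespace Traj

theorem tsum_uncurry_comp_pairEquiv_symm (F : ℕ → ℕ → ℝ≥0∞) :
    ∑' m, (Function.uncurry F ∘ Nat.pairEquiv.symm) m = ∑' k, ∑' l, F k l :=
  (Nat.pairEquiv.symm.tsum_eq (Function.uncurry F)).trans ENNReal.tsum_prod

theorem nonAnticipative_ite_lt {E : Type*} [Zero E] {T : Set (ℕ → E)} {X : ℕ → E} {j n : ℕ}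
    {H : ℕ → (ℕ → E) → E}
    (hH : ∀ i, j ≤ i → i < n → ∀ Y ∈ condSet T X j, ∀ Z ∈ condSet T X j,
      (∀ k, j ≤ k → k ≤ i → Y k = Z k) → H i Y = H i Z) :
    NonAnticipative T X j (fun i Y => if i < n then H i Y else 0) := by
  intro i hi Y hY Z hZ hYZ
  by_cases hin : i < n
  · simp only [if_pos hin]
    exact hH i hi hin Y hY Z hZ hYZ
  · simp only [if_neg hin]

section Hedges

variable {E : Type*} [NormedAddCommGroup E] [InnerProductSpace ℝ E]
  {T : Set (ℕ → E)} {X : ℕ → E} {j : ℕ}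

theorem piPort_ite_lt (H : ℕ → (ℕ → E) → E) (j n : ℕ) (V : ℝ) (Y : ℕ → E) :
    piPort (fun i Y => if i < n then H i Y else 0) j n V Y = piPort H j n V Y := by
  unfold piPort
  congr 1
  refine Finset.sum_congr rfl fun i hi => ?_
  dsimp only
  rw [if_pos (Finset.mem_Ico.mp hi).2]

theorem IsSuperhedge.sigmaUp_le {f : (ℕ → E) → EReal} {V : ℕ → ℝ}
    {H : ℕ → ℕ → (ℕ → E) → E} {n : ℕ → ℕ} (h : IsSuperhedge T X j f V H n) :
    sigmaUp T X j f ≤ SuperhedgeCost V :=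
  sInf_le ⟨V, H, n, h, rfl⟩

theorem IsNormHedge.Ibar_le {g : (ℕ → E) → ℝ≥0∞} {W : ℕ → ℝ}
    {G : ℕ → ℕ → (ℕ → E) → E} {N : ℕ → ℕ} (h : IsNormHedge T X j g W G N) :
    Ibar T X j g ≤ ∑' m, ENNReal.ofReal (W m) :=
  sInf_le ⟨W, G, N, h, rfl⟩

theorem exists_isNormHedge_tsum_lt {g : (ℕ → E) → ℝ≥0∞} {c : ℝ≥0∞}
    (h : Ibar T X j g < c) :
    ∃ W G N, IsNormHedge T X j g W G N ∧ ∑' m, ENNReal.ofReal (W m) < c := by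
  obtain ⟨_, ⟨W, G, N, hWGN, rfl⟩, hlt⟩ := sInf_lt_iff.mp h
  exact ⟨W, G, N, hWGN, hlt⟩

theorem isSuperhedge_cons {f : (ℕ → E) → EReal} {g : (ℕ → E) → ℝ≥0∞} {V₀ : ℝ}
    {H₀ : ℕ → (ℕ → E) → E} {n₀ : ℕ} {W : ℕ → ℝ} {G : ℕ → ℕ → (ℕ → E) → E} {N : ℕ → ℕ}
    (hH₀ : NonAnticipative T X j H₀) (hn₀ : j ≤ n₀) (hg : IsNormHedge T X j g W G N)
    (hf : ∀ Y ∈ condSet T X j, f Y ≤ (piPort H₀ j n₀ V₀ Y : EReal) + (g Y : EReal)) :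
    IsSuperhedge T X j f (Stream'.cons V₀ W) (Stream'.cons H₀ G) (Stream'.cons n₀ N) := by
  obtain ⟨hGna, hNj, hGnonneg, hgle⟩ := hg
  refine ⟨fun m => ?_, fun m => ?_, fun m hm => ?_, fun Y hY => ?_⟩
  · cases m with
    | zero => exact hH₀
    | succ m => exact hGna m
  · cases m with
    | zero => exact hn₀
    | succ m => exact hNj m
  · cases m with
    | zero => exact absurd hm (by norm_num)
    | succ m => exact hGnonneg m
  · exact (hf Y hY).trans (add_le_add le_rfl (EReal.coe_ennreal_le_coe_ennreal_iff.mpr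
      (hgle Y hY)))

theorem IsNormHedge.tsum {g : ℕ → (ℕ → E) → ℝ≥0∞} {W : ℕ → ℕ → ℝ}
    {G : ℕ → ℕ → ℕ → (ℕ → E) → E} {N : ℕ → ℕ → ℕ}
    (h : ∀ k, IsNormHedge T X j (g k) (W k) (G k) (N k)) :
    IsNormHedge T X j (fun Y => ∑' k, g k Y) (Function.uncurry W ∘ Nat.pairEquiv.symm)
      (Function.uncurry G ∘ Nat.pairEquiv.symm) (Function.uncurry N ∘ Nat.pairEquiv.symm) := by
  refine ⟨fun m => (h _).1 _, fun m => (h _).2.1 _, fun m => (h _).2.2.1 _, fun Y hY => ?_⟩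
  exact (ENNReal.tsum_le_tsum fun k => (h k).2.2.2 Y hY).trans
    (tsum_uncurry_comp_pairEquiv_symm _).ge

theorem Ibar_tsum_le (g : ℕ → (ℕ → E) → ℝ≥0∞) :
    Ibar T X j (fun Y => ∑' k, g k Y) ≤ ∑' k, Ibar T X j (g k) := by
  refine ENNReal.le_of_forall_pos_le_add fun ε hε hfin => ?_
  obtain ⟨δ, hδpos, hδ⟩ :=
    ENNReal.exists_pos_sum_of_countable' (ENNReal.coe_pos.mpr hε).ne' ℕ
  have hlt : ∀ k, Ibar T X j (g k) < Ibar T X j (g k) + δ k := fun k =>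
    ENNReal.lt_add_right (ENNReal.ne_top_of_tsum_ne_top hfin.ne k) (hδpos k).ne'
  choose W G N hWGN hcost using fun k => exists_isNormHedge_tsum_lt (hlt k)
  calc Ibar T X j (fun Y => ∑' k, g k Y)
      ≤ ∑' m, (Function.uncurry (fun k l => ENNReal.ofReal (W k l)) ∘ Nat.pairEquiv.symm) m :=
        (IsNormHedge.tsum hWGN).Ibar_le
    _ = ∑' k, ∑' l, ENNReal.ofReal (W k l) := tsum_uncurry_comp_pairEquiv_symm _
    _ ≤ ∑' k, (Ibar T X j (g k) + δ k) := ENNReal.tsum_le_tsum fun k => (hcost k).le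
    _ ≤ ∑' k, Ibar T X j (g k) + ε := by
        rw [ENNReal.tsum_add]
        gcongr

theorem NullAt.Ibar_indicator_top {A : Set (ℕ → E)} (hA : NullAt T X j A) :
    Ibar T X j (A.indicator fun _ => ∞) = 0 := by
  have hsum : (A.indicator fun _ => ∞) = fun Y => ∑' _ : ℕ, A.indicator (fun _ => 1) Y := by
    ext Y
    by_cases hY : Y ∈ A <;> simp [hY]
  rw [hsum]
  refine le_antisymm ?_ bot_le
  calc _ ≤ ∑' _ : ℕ, Ibar T X j (A.indicator fun _ => 1) := Ibar_tsum_le _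
    _ = 0 := by rw [hA, tsum_zero]

end Hedges

theorem sigmaUp_le_of_ae_superhedge_general
    (d : ℕ) (T : Set (ℕ → EuclideanSpace ℝ (Fin d)))
    (X : ℕ → EuclideanSpace ℝ (Fin d)) (j : ℕ)
    (f : (ℕ → EuclideanSpace ℝ (Fin d)) → EReal)
    (V : ℝ) (n : ℕ) (hn : j ≤ n)
    (H : ℕ → (ℕ → EuclideanSpace ℝ (Fin d)) → EuclideanSpace ℝ (Fin d))
    (hHna : ∀ i, j ≤ i → i < n → ∀ Y ∈ condSet T X j, ∀ Z ∈ condSet T X j,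
      (∀ k, j ≤ k → k ≤ i → Y k = Z k) → H i Y = H i Z)
    (A : Set (ℕ → EuclideanSpace ℝ (Fin d))) (hA : NullAt T X j A)
    (hhedge : ∀ Y ∈ condSet T X j \ A,
      f Y ≤ ((V + ∑ i ∈ Finset.Ico j n, ⟪H i Y, Y (i + 1) - Y i⟫_ℝ : ℝ) : EReal)) :
    sigmaUp T X j f ≤ (V : EReal) := by
  refine EReal.le_of_forall_lt_iff_le.mp fun z hz => ?_
  have hε : (0 : ℝ≥0∞) < ENNReal.ofReal (z - V) :=
    ENNReal.ofReal_pos.mpr (sub_pos.mpr (EReal.coe_lt_coe_iff.mp hz))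
  obtain ⟨W, G, N, hWGN, hcost⟩ :=
    exists_isNormHedge_tsum_lt (hA.Ibar_indicator_top.symm ▸ hε)
  have hbound : ∀ Y ∈ condSet T X j,
      f Y ≤ (piPort H j n V Y : EReal) + ((A.indicator (fun _ => ∞) Y : ℝ≥0∞) : EReal) := by
    intro Y hY
    by_cases hYA : Y ∈ A
    · rw [Set.indicator_of_mem hYA, EReal.coe_ennreal_top,
        EReal.add_top_of_ne_bot (EReal.coe_ne_bot _)]
      exact le_top
    · rw [Set.indicator_of_notMem hYA, EReal.coe_ennreal_zero, add_zero]
      exact hhedge Y ⟨hY, hYA⟩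
  have hsh := isSuperhedge_cons (V₀ := V) (nonAnticipative_ite_lt hHna) hn hWGN
    (by simpa only [piPort_ite_lt] using hbound)
  calc sigmaUp T X j f ≤ (V : EReal) + ((∑' m, ENNReal.ofReal (W m) : ℝ≥0∞) : EReal) :=
        hsh.sigmaUp_le
    _ ≤ (V : EReal) + ((ENNReal.ofReal (z - V) : ℝ≥0∞) : EReal) :=
        add_le_add le_rfl (EReal.coe_ennreal_le_coe_ennreal_iff.mpr hcost.le)
    _ = z := by
        rw [EReal.coe_ennreal_ofReal, max_eq_left (sub_pos.mpr (EReal.coe_lt_coe_iff.mp hz)).le,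
          ← EReal.coe_add, add_sub_cancel]

/-- if a single simple portfolio with initial value `V` superhedges `f` on the
conditional set off a conditionally null set, then `σ̄_j f(X) ≤ V`. -/
theorem sigmaUp_le_of_ae_superhedge
    (d : ℕ) (T : Set (ℕ → EuclideanSpace ℝ (Fin d))) (x0 : EuclideanSpace ℝ (Fin d))
    (hT : IsTrajectorySet T x0)
    (X : ℕ → EuclideanSpace ℝ (Fin d)) (hX : X ∈ T) (j : ℕ)
    (f : (ℕ → EuclideanSpace ℝ (Fin d)) → EReal)
    (V : ℝ) (n : ℕ) (hn : j ≤ n)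
    (H : ℕ → (ℕ → EuclideanSpace ℝ (Fin d)) → EuclideanSpace ℝ (Fin d))
    (hHna : ∀ i, j ≤ i → i < n → ∀ Y ∈ condSet T X j, ∀ Z ∈ condSet T X j,
      (∀ k, j ≤ k → k ≤ i → Y k = Z k) → H i Y = H i Z)
    (A : Set (ℕ → EuclideanSpace ℝ (Fin d))) (hA : NullAt T X j A)
    (hhedge : ∀ Y ∈ condSet T X j \ A,
      f Y ≤ ((V + ∑ i ∈ Finset.Ico j n, ⟪H i Y, Y (i + 1) - Y i⟫_ℝ : ℝ) : EReal)) :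
    sigmaUp T X j f ≤ (V : EReal) :=
  sigmaUp_le_of_ae_superhedge_general d T X j f V n hn H hHna A hA hhedge

end Traj
end
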